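/- Assume L is semiprime (ρ(⊥) = ⊥). Then the map a ↦ λ(a) restricts to an isomorphism from the Boolean algebra of complemented elements of L onto the Boolean algebra of complemented elements of the reticulation D. (In particular: it is an injective Boolean morphism, and surjectivity uses semiprimeness: λ(a) = 0 implies a = ⊥.) -/

import Mathlib

/-!
For a complemented element `a` with complement `a'`, every `x` splits as
`x = [a, x] ⊔ [a', x]`, because `[⊤, x] = x` and the commutator distributes over joins.
Hence `a ⊓ b = [a, b]`, so `lam`, which turns commutators of elements of `C` into meets,
preserves meets and complements; and `[a', x] = ⊥` forces `x ≤ a`.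
Semiprimeness makes `lam` reflect `⊥` (`lam x = ⊥` gives `comRho x ≤ comRho ⊥ = ⊥`), which yields
injectivity, and lets a complemented pair `d, e` of `D` be lifted to `a, c` with
`a ⊔ c = ⊤` and `[a, c] = ⊥`, which are then complements of each other.
-/

/-- `p` is a prime element with respect to the commutator `com`. -/
def ComPrime {L : Type*} [CompleteLattice L] (com : L → L → L) (p : L) : Prop :=
  p ≠ ⊤ ∧ ∀ a b : L, com a b ≤ p → a ≤ p ∨ b ≤ p

/-- The radical of `a`: the infimum of all primes above `a`. -/
def comRho {L : Type*} [CompleteLattice L] (com : L → L → L) (a : L) : L :=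
  sInf {p | ComPrime com p ∧ a ≤ p}

/-- `C`: the closure of the set of compact elements under binary joins and commutators. -/
inductive InC {L : Type*} [CompleteLattice L] (com : L → L → L) : L → Prop
  | base (a : L) : IsCompactElement a → InC com a
  | join {a b : L} : InC com a → InC com b → InC com (a ⊔ b)
  | comm {a b : L} : InC com a → InC com b → InC com (com a b)

section Commutator

variable {L : Type*} [CompleteLattice L] {com : L → L → L} {a a' b x : L}

theorem eq_com_sup_com_of_sup_eq_top
    (hsup : ∀ a b c : L, com (a ⊔ b) c = com a c ⊔ com b c) (htop : ∀ a : L, com ⊤ a = a)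
    (h : a ⊔ a' = ⊤) (x : L) : x = com a x ⊔ com a' x := by
  rw [← hsup, h, htop]

theorem inf_le_com_sup_com_of_sup_eq_top (hcomm : ∀ a b : L, com a b = com b a)
    (hmono : ∀ a b c : L, a ≤ b → com a c ≤ com b c)
    (hsup : ∀ a b c : L, com (a ⊔ b) c = com a c ⊔ com b c) (htop : ∀ a : L, com ⊤ a = a)
    (h : a ⊔ a' = ⊤) (b : L) : a ⊓ b ≤ com a b ⊔ com a' a := by
  have hmono_right : ∀ c d e : L, d ≤ e → com c d ≤ com c e := fun c d e hde => by
    rw [hcomm c, hcomm c]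
    exact hmono d e c hde
  rw [eq_com_sup_com_of_sup_eq_top hsup htop h (a ⊓ b)]
  exact sup_le_sup (hmono_right _ _ _ inf_le_right) (hmono_right _ _ _ inf_le_left)

theorem IsCompl.inf_eq_com (hcomm : ∀ a b : L, com a b = com b a)
    (hmono : ∀ a b c : L, a ≤ b → com a c ≤ com b c)
    (hle : ∀ a b : L, com a b ≤ a ⊓ b)
    (hsup : ∀ a b c : L, com (a ⊔ b) c = com a c ⊔ com b c) (htop : ∀ a : L, com ⊤ a = a)
    (h : IsCompl a a') (b : L) : a ⊓ b = com a b := by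
  refine le_antisymm ?_ (hle a b)
  have hcom_bot : com a' a = ⊥ := le_bot_iff.mp ((hle a' a).trans h.symm.inf_eq_bot.le)
  simpa [hcom_bot] using inf_le_com_sup_com_of_sup_eq_top hcomm hmono hsup htop h.sup_eq_top b

theorem IsCompl.le_of_com_eq_bot (hle : ∀ a b : L, com a b ≤ a ⊓ b)
    (hsup : ∀ a b c : L, com (a ⊔ b) c = com a c ⊔ com b c) (htop : ∀ a : L, com ⊤ a = a)
    (h : IsCompl a a') (hx : com a' x = ⊥) : x ≤ a := by
  rw [eq_com_sup_com_of_sup_eq_top hsup htop h.sup_eq_top x, hx, sup_bot_eq]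
  exact (hle a x).trans inf_le_left

theorem isCompl_of_sup_eq_top_of_com_eq_bot (hcomm : ∀ a b : L, com a b = com b a)
    (hmono : ∀ a b c : L, a ≤ b → com a c ≤ com b c)
    (hsup : ∀ a b c : L, com (a ⊔ b) c = com a c ⊔ com b c) (htop : ∀ a : L, com ⊤ a = a)
    (h : a ⊔ a' = ⊤) (hcom : com a a' = ⊥) : IsCompl a a' := by
  refine ⟨disjoint_iff.mpr (le_bot_iff.mp ?_), codisjoint_iff.mpr h⟩
  simpa [hcom, hcomm a' a] using inf_le_com_sup_com_of_sup_eq_top hcomm hmono hsup htop h a'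

theorem le_comRho (com : L → L → L) (a : L) : a ≤ comRho com a :=
  le_sInf fun _ hp => hp.2

theorem eq_bot_of_lam_eq_bot {D : Type*} [Preorder D] [Bot D] {lam : L → D}
    (hlamle : ∀ a b : L, InC com a → InC com b →
      (lam a ≤ lam b ↔ comRho com a ≤ comRho com b))
    (hlambot : lam ⊥ = ⊥) (hsemiprime : comRho com (⊥ : L) = ⊥) (hbot : InC com ⊥)
    (ha : InC com a) (h : lam a = ⊥) : a = ⊥ := by
  have hrho : comRho com a ≤ comRho com ⊥ := (hlamle a ⊥ ha hbot).mp (by rw [h, hlambot])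
  exact le_bot_iff.mp ((le_comRho com a).trans (hrho.trans_eq hsemiprime))

end Commutator

theorem boolean_center_iso_of_semiprime_general {L : Type*} [CompleteLattice L]
    (com : L → L → L)
    (hcomm : ∀ a b : L, com a b = com b a)
    (hmono : ∀ a b c : L, a ≤ b → com a c ≤ com b c)
    (hle : ∀ a b : L, com a b ≤ a ⊓ b)
    (hdist : ∀ (s : Set L) (b : L), com (sSup s) b = ⨆ x ∈ s, com x b)
    (htop : ∀ a : L, com ⊤ a = a)
    {D : Type*} [DistribLattice D] [BoundedOrder D] (lam : L → D)
    (hlamle : ∀ a b : L, InC com a → InC com b →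
      (lam a ≤ lam b ↔ comRho com a ≤ comRho com b))
    (hlamsup : ∀ a b : L, InC com a → InC com b → lam (a ⊔ b) = lam a ⊔ lam b)
    (hlaminf : ∀ a b : L, InC com a → InC com b → lam (com a b) = lam a ⊓ lam b)
    (hlambot : lam ⊥ = ⊥) (hlamtop : ∀ a : L, InC com a → (lam a = ⊤ ↔ a = ⊤))
    (hlamsurj : ∀ d : D, ∃ a : L, InC com a ∧ lam a = d)
    (hsemiprime : comRho com (⊥ : L) = ⊥)
    (hcompl_compact : ∀ a : L, (∃ b, IsCompl a b) → IsCompactElement a) :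
    (∀ a b : L, (∃ a', IsCompl a a') → (∃ b', IsCompl b b') →
      lam (a ⊔ b) = lam a ⊔ lam b ∧ lam (a ⊓ b) = lam a ⊓ lam b) ∧
    (∀ a : L, (∃ b, IsCompl a b) → ∃ d : D, IsCompl (lam a) d) ∧
    (∀ a b : L, (∃ a', IsCompl a a') → (∃ b', IsCompl b b') → lam a = lam b → a = b) ∧
    (∀ d : D, (∃ e, IsCompl d e) → ∃ a : L, (∃ b, IsCompl a b) ∧ lam a = d) := by
  have hsup : ∀ a b c : L, com (a ⊔ b) c = com a c ⊔ com b c := fun a b c => by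
    rw [← sSup_pair, hdist, iSup_pair]
  have hC : ∀ {a b : L}, IsCompl a b → InC com a := fun h =>
    .base _ (hcompl_compact _ ⟨_, h⟩)
  have hlam_eq_bot : ∀ {a : L}, InC com a → lam a = ⊥ → a = ⊥ :=
    eq_bot_of_lam_eq_bot hlamle hlambot hsemiprime (hC isCompl_bot_top)
  have hlam_inf : ∀ {a a' : L}, IsCompl a a' → ∀ b, InC com b →
      lam (a ⊓ b) = lam a ⊓ lam b := fun h b hb => by
    rw [h.inf_eq_com hcomm hmono hle hsup htop, hlaminf _ _ (hC h) hb]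
  have hlam_isCompl : ∀ {a a' : L}, IsCompl a a' → IsCompl (lam a) (lam a') := fun h =>
    ⟨disjoint_iff.mpr (by rw [← hlam_inf h _ (hC h.symm), h.inf_eq_bot, hlambot]),
      codisjoint_iff.mpr (by
        rw [← hlamsup _ _ (hC h) (hC h.symm), h.sup_eq_top, hlamtop _ (hC isCompl_top_bot)])⟩
  have hle_of_lam_le : ∀ {a b b' : L}, InC com a → IsCompl b b' → lam a ≤ lam b → a ≤ b :=
    fun ha hb hab => hb.le_of_com_eq_bot hle hsup htop <|
      hlam_eq_bot (.comm (hC hb.symm) ha) <| by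
      rw [hlaminf _ _ (hC hb.symm) ha]
      exact ((hlam_isCompl hb).symm.disjoint.mono_right hab).eq_bot
  refine ⟨fun a b ⟨_, ha⟩ ⟨_, hb⟩ => ⟨hlamsup a b (hC ha) (hC hb), hlam_inf ha b (hC hb)⟩,
    fun a ⟨a', h⟩ => ⟨lam a', hlam_isCompl h⟩, ?_, ?_⟩
  · rintro a b ⟨a', ha⟩ ⟨b', hb⟩ hab
    exact le_antisymm (hle_of_lam_le (hC ha) hb hab.le) (hle_of_lam_le (hC hb) ha hab.ge)
  · rintro d ⟨e, hde⟩
    obtain ⟨a, ha, rfl⟩ := hlamsurj d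
    obtain ⟨c, hc, rfl⟩ := hlamsurj e
    have hac_sup : a ⊔ c = ⊤ :=
      (hlamtop _ (.join ha hc)).mp (by rw [hlamsup a c ha hc, hde.sup_eq_top])
    have hac_com : com a c = ⊥ :=
      hlam_eq_bot (.comm ha hc) (by rw [hlaminf a c ha hc, hde.inf_eq_bot])
    exact ⟨a, ⟨c, isCompl_of_sup_eq_top_of_com_eq_bot hcomm hmono hsup htop hac_sup hac_com⟩,
      rfl⟩

theorem boolean_center_iso_of_semiprime {L : Type*} [CompleteLattice L]
    (com : L → L → L)
    (hcomm : ∀ a b : L, com a b = com b a)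
    (hmono : ∀ a b c : L, a ≤ b → com a c ≤ com b c)
    (hle : ∀ a b : L, com a b ≤ a ⊓ b)
    (hdist : ∀ (s : Set L) (b : L), com (sSup s) b = ⨆ x ∈ s, com x b)
    (htop : ∀ a : L, com ⊤ a = a)
    (hex : ∀ a : L, a ≠ ⊤ → ∃ p, ComPrime com p ∧ a ≤ p)
    (hcg : ∀ a : L, a = sSup {k | IsCompactElement k ∧ k ≤ a})
    (htopc : IsCompactElement (⊤ : L))
    {D : Type*} [DistribLattice D] [BoundedOrder D] (lam : L → D)
    (hlamle : ∀ a b : L, InC com a → InC com b →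
      (lam a ≤ lam b ↔ comRho com a ≤ comRho com b))
    (hlamsup : ∀ a b : L, InC com a → InC com b → lam (a ⊔ b) = lam a ⊔ lam b)
    (hlaminf : ∀ a b : L, InC com a → InC com b → lam (com a b) = lam a ⊓ lam b)
    (hlambot : lam ⊥ = ⊥) (hlamtop : ∀ a : L, InC com a → (lam a = ⊤ ↔ a = ⊤))
    (hlamsurj : ∀ d : D, ∃ a : L, InC com a ∧ lam a = d)
    (hsemiprime : comRho com (⊥ : L) = ⊥)
    (hcompl_compact : ∀ a : L, (∃ b, IsCompl a b) → IsCompactElement a) :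
    (∀ a b : L, (∃ a', IsCompl a a') → (∃ b', IsCompl b b') →
      lam (a ⊔ b) = lam a ⊔ lam b ∧ lam (a ⊓ b) = lam a ⊓ lam b) ∧
    (∀ a : L, (∃ b, IsCompl a b) → ∃ d : D, IsCompl (lam a) d) ∧
    (∀ a b : L, (∃ a', IsCompl a a') → (∃ b', IsCompl b b') → lam a = lam b → a = b) ∧
    (∀ d : D, (∃ e, IsCompl d e) → ∃ a : L, (∃ b, IsCompl a b) ∧ lam a = d) :=
  boolean_center_iso_of_semiprime_general com hcomm hmono hle hdist htop lam hlamle hlamsup hlaminf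
    hlambot hlamtop hlamsurj hsemiprime hcompl_compact
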